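/- arXiv:2105.04809 — 2 statements merged into one kernel-verified Lean document; each statement's English description precedes it below -/
import Mathlib

section
/- Let V₁, V₂, V₃ be pairwise disjoint finite vertex sets with |V₁| = |V₂| = a and |V₃| = k, and let w₁, …, w_k be an enumeration of V₃. Let G be the simple graph whose edges are: all pairs {u, w} with u ∈ V₁ and w ∈ V₃; all pairs {v, w} with v ∈ V₂ and w ∈ V₃; and the edges of k pairwise edge-disjoint perfect matchings M₁, …, M_k between V₁ and V₂. Then the triangles {u, v, w_i} over all i ∈ {1, …, k} and all edges {u, v} ∈ M_i form a family of a·k pairwise edge-disjoint triangles in G. -/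
open SimpleGraph

/-- The set of edges spanned by a triangle `t`: the non-diagonal unordered pairs
both of whose elements lie in `t`. -/
def triangleEdges {V : Type*} (t : Finset V) : Set (Sym2 V) :=
  {e | ¬ e.IsDiag ∧ ∀ v ∈ e, v ∈ t}

/-- The edge set of the lower-bound construction: all pairs between `V₁` and `V₃`, all
pairs between `V₂` and `V₃`, and, for each `i`, the edges `{u, M i u}` (`u ∈ V₁`) of
the `i`-th perfect matching between `V₁` and `V₂`. -/
def lowerBoundEdges {V : Type*} (V₁ V₂ V₃ : Finset V) {k : ℕ} (M : Fin k → V → V) :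
    Set (Sym2 V) :=
  {e | (∃ u ∈ V₁, ∃ w ∈ V₃, e = s(u, w)) ∨ (∃ v ∈ V₂, ∃ w ∈ V₃, e = s(v, w)) ∨
    (∃ i : Fin k, ∃ u ∈ V₁, e = s(u, M i u))}

/-!
Since `V₁`, `V₂`, `V₃` are pairwise disjoint, a vertex shared by the triangles
`{u, M i u, w i}` and `{v, M j v, w j}` sits in the same part, hence the same coordinate, of
both; so two triangles sharing an edge agree in two of their three coordinates. Any two
coordinates determine `(i, u)`: `w` is injective, each `M i` is injective on `V₁`, and
`M i u ≠ M j u` for `i ≠ j`. Hence distinct triangles meet in at most one vertex, which gives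
both their edge-disjointness and their number `a·k`.
-/

section

variable {V : Type*} [DecidableEq V]

theorem disjoint_triangleEdges_of_card_inter_le_one {t₁ t₂ : Finset V}
    (h : (t₁ ∩ t₂).card ≤ 1) : Disjoint (triangleEdges t₁) (triangleEdges t₂) := by
  rw [Set.disjoint_left]
  rintro e ⟨hdiag, he₁⟩ ⟨-, he₂⟩
  induction e using Sym2.ind with | h x y => ?_
  have hxy : x ≠ y := fun hxy => hdiag (Sym2.mk_isDiag_iff.mpr hxy)
  have : 1 < (t₁ ∩ t₂).card := Finset.one_lt_card.mpr
    ⟨x, Finset.mem_inter.mpr ⟨he₁ x (Sym2.mem_mk_left x y), he₂ x (Sym2.mem_mk_left x y)⟩,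
     y, Finset.mem_inter.mpr ⟨he₁ y (Sym2.mem_mk_right x y), he₂ y (Sym2.mem_mk_right x y)⟩,
     hxy⟩
  omega

section Transversal

variable {A B C : Finset V} {a a' b b' c c' : V}

theorem coord_eq_of_mem_inter_triple (hAB : Disjoint A B) (hAC : Disjoint A C)
    (hBC : Disjoint B C) (ha : a ∈ A) (ha' : a' ∈ A) (hb : b ∈ B) (hb' : b' ∈ B)
    (hc : c ∈ C) (hc' : c' ∈ C) {x : V}
    (hx : x ∈ ({a, b, c} ∩ {a', b', c'} : Finset V)) :
    (x = a ∧ a = a') ∨ (x = b ∧ b = b') ∨ (x = c ∧ c = c') := by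
  simp only [Finset.mem_inter, Finset.mem_insert, Finset.mem_singleton] at hx
  rcases hx with ⟨rfl | rfl | rfl, rfl | rfl | rfl⟩ <;>
    first
    | tauto
    | exact (Finset.disjoint_left.mp hAB ‹_› ‹_›).elim
    | exact (Finset.disjoint_left.mp hAC ‹_› ‹_›).elim
    | exact (Finset.disjoint_left.mp hBC ‹_› ‹_›).elim

theorem two_coords_eq_of_one_lt_card_inter_triple (hAB : Disjoint A B) (hAC : Disjoint A C)
    (hBC : Disjoint B C) (ha : a ∈ A) (ha' : a' ∈ A) (hb : b ∈ B) (hb' : b' ∈ B)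
    (hc : c ∈ C) (hc' : c' ∈ C)
    (h : 1 < ({a, b, c} ∩ {a', b', c'} : Finset V).card) :
    (a = a' ∧ b = b') ∨ (a = a' ∧ c = c') ∨ (b = b' ∧ c = c') := by
  obtain ⟨x, hx, y, hy, hxy⟩ := Finset.one_lt_card.mp h
  have hx := coord_eq_of_mem_inter_triple hAB hAC hBC ha ha' hb hb' hc hc' hx
  have hy := coord_eq_of_mem_inter_triple hAB hAC hBC ha ha' hb hb' hc hc' hy
  rcases hx with ⟨rfl, hx⟩ | ⟨rfl, hx⟩ | ⟨rfl, hx⟩ <;>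
    rcases hy with ⟨rfl, hy⟩ | ⟨rfl, hy⟩ | ⟨rfl, hy⟩ <;>
    first | exact absurd rfl hxy | tauto

end Transversal

section LowerBoundConstruction

variable {V₁ V₂ V₃ : Finset V} {k : ℕ} {M : Fin k → V → V} {w : Fin k → V}

theorem isNClique_three_of_edgeSet_eq_lowerBoundEdges {G : SimpleGraph V}
    (hG : G.edgeSet = lowerBoundEdges V₁ V₂ V₃ M) {i : Fin k} {u : V} (hu : u ∈ V₁)
    (hMu : M i u ∈ V₂) (hwi : w i ∈ V₃) : G.IsNClique 3 {u, M i u, w i} := by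
  simp only [is3Clique_triple_iff, ← mem_edgeSet, hG]
  exact ⟨Or.inr (Or.inr ⟨i, u, hu, rfl⟩), Or.inl ⟨u, hu, w i, hwi, rfl⟩,
    Or.inr (Or.inl ⟨M i u, hMu, w i, hwi, rfl⟩)⟩

theorem eq_of_one_lt_card_inter_lowerBound_triangles (hd₁₂ : Disjoint V₁ V₂)
    (hd₁₃ : Disjoint V₁ V₃) (hd₂₃ : Disjoint V₂ V₃) (hwinj : Function.Injective w)
    (hwmem : ∀ i, w i ∈ V₃) (hM : ∀ i, Set.BijOn (M i) ↑V₁ ↑V₂)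
    (hMdisj : ∀ i j, i ≠ j → ∀ u ∈ V₁, M i u ≠ M j u) {i j : Fin k} {u v : V}
    (hu : u ∈ V₁) (hv : v ∈ V₁)
    (h : 1 < ({u, M i u, w i} ∩ {v, M j v, w j} : Finset V).card) : i = j ∧ u = v := by
  rcases two_coords_eq_of_one_lt_card_inter_triple hd₁₂ hd₁₃ hd₂₃ hu hv
      ((hM i).mapsTo hu) ((hM j).mapsTo hv) (hwmem i) (hwmem j) h
    with ⟨rfl, hM_eq⟩ | ⟨huv, hw_eq⟩ | ⟨hM_eq, hw_eq⟩
  · exact ⟨not_not.mp fun hij => hMdisj i j hij u hu hM_eq, rfl⟩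
  · exact ⟨hwinj hw_eq, huv⟩
  · obtain rfl := hwinj hw_eq
    exact ⟨rfl, (hM i).injOn hu hv hM_eq⟩

end LowerBoundConstruction

end

theorem lower_bound_graph_edge_disjoint_triangles_general
    {V : Type*} [DecidableEq V] (G : SimpleGraph V)
    (V₁ V₂ V₃ : Finset V) (a k : ℕ)
    (hd₁₂ : Disjoint V₁ V₂) (hd₁₃ : Disjoint V₁ V₃) (hd₂₃ : Disjoint V₂ V₃)
    (ha₁ : V₁.card = a)
    (w : Fin k → V) (hwinj : Function.Injective w) (hwmem : ∀ i, w i ∈ V₃)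
    (M : Fin k → V → V)
    (hM : ∀ i, Set.BijOn (M i) ↑V₁ ↑V₂)
    (hMdisj : ∀ i j, i ≠ j → ∀ u ∈ V₁, M i u ≠ M j u)
    (hG : G.edgeSet = lowerBoundEdges V₁ V₂ V₃ M) :
    ∃ T : Finset (Finset V),
      T = Finset.image (fun p : Fin k × V => ({p.2, M p.1 p.2, w p.1} : Finset V))
        (Finset.univ ×ˢ V₁) ∧
      T.card = a * k ∧
      (∀ t ∈ T, G.IsNClique 3 t) ∧
      (∀ t₁ ∈ T, ∀ t₂ ∈ T, t₁ ≠ t₂ → Disjoint (triangleEdges t₁) (triangleEdges t₂)) := by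
  set triangle := fun p : Fin k × V => ({p.2, M p.1 p.2, w p.1} : Finset V)
  have hclique : ∀ p ∈ Finset.univ ×ˢ V₁, G.IsNClique 3 (triangle p) := fun p hp =>
    isNClique_three_of_edgeSet_eq_lowerBoundEdges hG (Finset.mem_product.mp hp).2
      ((hM p.1).mapsTo (Finset.mem_product.mp hp).2) (hwmem p.1)
  have heq : ∀ p ∈ Finset.univ ×ˢ V₁, ∀ q ∈ Finset.univ ×ˢ V₁,
      1 < (triangle p ∩ triangle q).card → p = q := fun p hp q hq h =>
    Prod.ext_iff.mpr <| eq_of_one_lt_card_inter_lowerBound_triangles hd₁₂ hd₁₃ hd₂₃ hwinj hwmem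
      hM hMdisj (Finset.mem_product.mp hp).2 (Finset.mem_product.mp hq).2 h
  refine ⟨_, rfl, ?_, ?_, ?_⟩
  · rw [Finset.card_image_of_injOn, Finset.card_product, Finset.card_univ, Fintype.card_fin,
      ha₁, Nat.mul_comm]
    intro p hp q hq hpq
    refine heq p hp q hq ?_
    rw [hpq, Finset.inter_self, (hclique q hq).card_eq]
    norm_num
  · simpa only [Finset.forall_mem_image] using hclique
  · simp only [Finset.forall_mem_image]
    intro p hp q hq hne
    exact disjoint_triangleEdges_of_card_inter_le_one
      (not_lt.mp fun h => hne (congrArg triangle (heq p hp q hq h)))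

/-- In the lower-bound construction (complete bipartite graphs between `V₁, V₃` and
`V₂, V₃`, plus `k` pairwise edge-disjoint perfect matchings `M i` between `V₁` and
`V₂`, where `|V₁| = |V₂| = a`, `|V₃| = k` with enumeration `w`), the triangles
`{u, M i u, w i}` over all `i` and all `u ∈ V₁` form a family of `a·k` pairwise
edge-disjoint triangles. -/
theorem lower_bound_graph_edge_disjoint_triangles
    {V : Type*} [Fintype V] [DecidableEq V] (G : SimpleGraph V)
    (V₁ V₂ V₃ : Finset V) (a k : ℕ)
    (hd₁₂ : Disjoint V₁ V₂) (hd₁₃ : Disjoint V₁ V₃) (hd₂₃ : Disjoint V₂ V₃)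
    (ha₁ : V₁.card = a) (ha₂ : V₂.card = a) (hk : V₃.card = k)
    (w : Fin k → V) (hwinj : Function.Injective w) (hwmem : ∀ i, w i ∈ V₃)
    (M : Fin k → V → V)
    (hM : ∀ i, Set.BijOn (M i) ↑V₁ ↑V₂)
    (hMdisj : ∀ i j, i ≠ j → ∀ u ∈ V₁, M i u ≠ M j u)
    (hG : G.edgeSet = lowerBoundEdges V₁ V₂ V₃ M) :
    ∃ T : Finset (Finset V),
      T = Finset.image (fun p : Fin k × V => ({p.2, M p.1 p.2, w p.1} : Finset V))
        (Finset.univ ×ˢ V₁) ∧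
      T.card = a * k ∧
      (∀ t ∈ T, G.IsNClique 3 t) ∧
      (∀ t₁ ∈ T, ∀ t₂ ∈ T, t₁ ≠ t₂ → Disjoint (triangleEdges t₁) (triangleEdges t₂)) :=
  lower_bound_graph_edge_disjoint_triangles_general G V₁ V₂ V₃ a k hd₁₂ hd₁₃ hd₂₃ ha₁ w hwinj hwmem
    M hM hMdisj hG
end

section
/- Let V₁, V₂, V₃ be pairwise disjoint finite vertex sets with |V₁| = |V₂| = a and |V₃| = k (a, k ≥ 1), and let G be the simple graph whose edge set consists exactly of: all pairs between V₁ and V₃, all pairs between V₂ and V₃, and the edges of k pairwise edge-disjoint perfect matchings between V₁ and V₂. Then G has exactly 3·a·k edges, contains a·k pairwise edge-disjoint triangles, and consequently G is (1/3)-far from being triangle-free: every set F of edges whose deletion makes G triangle-free satisfies |F| ≥ a·k, which is one third of the number of edges of G. -/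
open SimpleGraph

/-!
The graph is the edge-disjoint union of the `a·k` triangles `{u, M i u, w i}` (`u ∈ V₁`, with
`w i` the `i`-th vertex of `V₃`): the edges `u w i` and `u (M i u)` lie in the triangle of
`(u, i)`, and an edge `v w i` with `v ∈ V₂` in that of `((M i)⁻¹ v, i)`. Two of these triangles
share at most one vertex, since any two vertices of a triangle determine it. Hence the graph has
`3·a·k` edges, and a set of edges whose deletion destroys every triangle contains an edge from
each of the `a·k` disjoint ones.
-/

section

variable {V : Type*}

theorem mk_mem_triangleEdges {t : Finset V} {x y : V} (hxy : x ≠ y) (hx : x ∈ t)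
    (hy : y ∈ t) : s(x, y) ∈ triangleEdges t :=
  ⟨Sym2.mk_isDiag_iff.not.mpr hxy, by simp [hx, hy]⟩

theorem finite_triangleEdges (t : Finset V) : (triangleEdges t).Finite :=
  t.sym2.finite_toSet.subset fun _ he => Finset.mem_sym2_iff.mpr he.2

theorem triangleEdges_triple [DecidableEq V] {x y z : V} (hxy : x ≠ y) (hxz : x ≠ z)
    (hyz : y ≠ z) : triangleEdges {x, y, z} = {s(x, y), s(x, z), s(y, z)} := by
  ext e
  induction e using Sym2.ind with
  | _ a b =>
    simp only [triangleEdges, Set.mem_ofPred_eq, Sym2.mk_isDiag_iff, Sym2.mem_iff,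
      forall_eq_or_imp, forall_eq, Finset.mem_insert, Finset.mem_singleton, Set.mem_insert_iff,
      Sym2.eq_iff]
    grind

theorem ncard_triangleEdges_triple [DecidableEq V] {x y z : V} (hxy : x ≠ y) (hxz : x ≠ z)
    (hyz : y ≠ z) : (triangleEdges {x, y, z}).ncard = 3 := by
  rw [triangleEdges_triple hxy hxz hyz, Set.ncard_eq_three]
  refine ⟨_, _, _, ?_, ?_, ?_, rfl⟩ <;> simp only [ne_eq, Sym2.eq_iff] <;> grind

theorem exists_mem_triangleEdges_of_cliqueFree_deleteEdges {G : SimpleGraph V}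
    {F : Set (Sym2 V)} {t : Finset V} (ht : G.IsNClique 3 t)
    (hF : (G.deleteEdges F).CliqueFree 3) : ∃ e ∈ F, e ∈ triangleEdges t := by
  by_contra! h
  refine hF t ⟨fun x hx y hy hxy => deleteEdges_adj.mpr ⟨ht.isClique hx hy hxy, fun hmem => ?_⟩,
    ht.card_eq⟩
  exact h _ hmem (mk_mem_triangleEdges hxy hx hy)

theorem card_le_ncard_of_cliqueFree_deleteEdges {G : SimpleGraph V} {F : Set (Sym2 V)}
    (hF : F.Finite) {T : Finset (Finset V)} (hT : ∀ t ∈ T, G.IsNClique 3 t)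
    (hdisj : (T : Set (Finset V)).PairwiseDisjoint triangleEdges)
    (hfree : (G.deleteEdges F).CliqueFree 3) : T.card ≤ F.ncard := by
  rw [Set.ncard_eq_toFinset_card F hF]
  refine Finset.card_le_card_of_forall_subsingleton (fun t e => e ∈ triangleEdges t)
    (fun t ht => ?_) (fun e _ t₁ ht₁ t₂ ht₂ => ?_)
  · obtain ⟨e, heF, het⟩ := exists_mem_triangleEdges_of_cliqueFree_deleteEdges (hT t ht) hfree
    exact ⟨e, hF.mem_toFinset.mpr heF, het⟩
  · by_contra hne
    exact Set.disjoint_left.mp (hdisj ht₁.1 ht₂.1 hne) ht₁.2 ht₂.2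

variable {k : ℕ}

/-- `w` enumerates `V₃`; the `i`-th matching `M i` will be completed to triangles through
the vertex `w i`. -/
structure IsLowerBoundConstruction (V₁ V₂ V₃ : Finset V) (M : Fin k → V → V) (w : Fin k → V) :
    Prop where
  disjoint₁₂ : Disjoint V₁ V₂
  disjoint₁₃ : Disjoint V₁ V₃
  disjoint₂₃ : Disjoint V₂ V₃
  bijOn : ∀ i, Set.BijOn (M i) V₁ V₂
  apply_ne_apply : ∀ i j, i ≠ j → ∀ u ∈ V₁, M i u ≠ M j u
  bijOn_enum : Set.BijOn w Set.univ V₃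

def lowerBoundTriangle [DecidableEq V] (M : Fin k → V → V) (w : Fin k → V) (p : V × Fin k) :
    Finset V :=
  {p.1, M p.2 p.1, w p.2}

namespace IsLowerBoundConstruction

variable {V₁ V₂ V₃ : Finset V} {M : Fin k → V → V} {w : Fin k → V}

theorem apply_mem (h : IsLowerBoundConstruction V₁ V₂ V₃ M w) {u : V} (hu : u ∈ V₁)
    (i : Fin k) : M i u ∈ V₂ :=
  (h.bijOn i).mapsTo hu

theorem enum_mem (h : IsLowerBoundConstruction V₁ V₂ V₃ M w) (i : Fin k) : w i ∈ V₃ :=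
  h.bijOn_enum.mapsTo (Set.mem_univ i)

theorem triangle_vertices_ne (h : IsLowerBoundConstruction V₁ V₂ V₃ M w) {u : V}
    (hu : u ∈ V₁) (i : Fin k) : u ≠ M i u ∧ u ≠ w i ∧ M i u ≠ w i :=
  ⟨fun e => Finset.disjoint_left.mp h.disjoint₁₂ hu (e ▸ h.apply_mem hu i),
    fun e => Finset.disjoint_left.mp h.disjoint₁₃ hu (e ▸ h.enum_mem i),
    fun e => Finset.disjoint_left.mp h.disjoint₂₃ (h.apply_mem hu i) (e ▸ h.enum_mem i)⟩

variable [DecidableEq V]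

theorem common_vertex_cases (h : IsLowerBoundConstruction V₁ V₂ V₃ M w) {u u' x : V}
    (hu : u ∈ V₁) (hu' : u' ∈ V₁) {i i' : Fin k} (hx : x ∈ lowerBoundTriangle M w (u, i))
    (hx' : x ∈ lowerBoundTriangle M w (u', i')) :
    (x = u ∧ x = u') ∨ (x = M i u ∧ x = M i' u') ∨ (x = w i ∧ x = w i') := by
  have h₁₂ := Finset.disjoint_left.mp h.disjoint₁₂
  have h₁₃ := Finset.disjoint_left.mp h.disjoint₁₃
  have h₂₃ := Finset.disjoint_left.mp h.disjoint₂₃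
  have := h.apply_mem hu i
  have := h.apply_mem hu' i'
  have := h.enum_mem i
  have := h.enum_mem i'
  simp only [lowerBoundTriangle, Finset.mem_insert, Finset.mem_singleton] at hx hx'
  grind

theorem eq_of_two_mem_lowerBoundTriangle (h : IsLowerBoundConstruction V₁ V₂ V₃ M w)
    {p q : V × Fin k} (hp : p.1 ∈ V₁) (hq : q.1 ∈ V₁) {x y : V} (hxy : x ≠ y)
    (hxp : x ∈ lowerBoundTriangle M w p) (hyp : y ∈ lowerBoundTriangle M w p)
    (hxq : x ∈ lowerBoundTriangle M w q) (hyq : y ∈ lowerBoundTriangle M w q) : p = q := by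
  obtain ⟨u, i⟩ := p
  obtain ⟨u', i'⟩ := q
  have hw : w i = w i' → i = i' := fun e => h.bijOn_enum.injOn trivial trivial e
  have hM : u = u' → M i u = M i' u' → i = i' := fun e e' => by
    by_contra hii
    exact h.apply_ne_apply i i' hii u hp (e ▸ e')
  have hu : i = i' → M i u = M i' u' → u = u' := fun e e' =>
    (h.bijOn i).injOn hp hq (e ▸ e')
  have := h.common_vertex_cases hp hq hxp hxq
  have := h.common_vertex_cases hp hq hyp hyq
  grind

theorem injOn_lowerBoundTriangle (h : IsLowerBoundConstruction V₁ V₂ V₃ M w) :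
    Set.InjOn (lowerBoundTriangle M w) (V₁ ×ˢ Finset.univ : Finset (V × Fin k)) := by
  rintro ⟨u, i⟩ hp q hq hpq
  simp only [Finset.coe_product, Set.mem_prod, Finset.mem_coe] at hp hq
  have hu : u ∈ lowerBoundTriangle M w (u, i) := by simp [lowerBoundTriangle]
  have hMu : M i u ∈ lowerBoundTriangle M w (u, i) := by simp [lowerBoundTriangle]
  exact h.eq_of_two_mem_lowerBoundTriangle hp.1 hq.1 (h.triangle_vertices_ne hp.1 i).1 hu hMu
    (hpq ▸ hu) (hpq ▸ hMu)

theorem pairwiseDisjoint_triangleEdges (h : IsLowerBoundConstruction V₁ V₂ V₃ M w) :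
    (↑(V₁ ×ˢ Finset.univ : Finset (V × Fin k)) : Set (V × Fin k)).PairwiseDisjoint
      (triangleEdges ∘ lowerBoundTriangle M w) := by
  intro p hp q hq hpq
  simp only [Finset.coe_product, Set.mem_prod, Finset.mem_coe] at hp hq
  refine Set.disjoint_left.mpr fun e ⟨hdiag, hep⟩ ⟨_, heq⟩ => hpq ?_
  induction e using Sym2.ind with
  | _ x y =>
    exact h.eq_of_two_mem_lowerBoundTriangle hp.1 hq.1 (Sym2.mk_isDiag_iff.not.mp hdiag)
      (hep x (Sym2.mem_mk_left x y)) (hep y (Sym2.mem_mk_right x y))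
      (heq x (Sym2.mem_mk_left x y)) (heq y (Sym2.mem_mk_right x y))

theorem lowerBoundEdges_eq_biUnion (h : IsLowerBoundConstruction V₁ V₂ V₃ M w) :
    lowerBoundEdges V₁ V₂ V₃ M =
      ⋃ p ∈ (↑(V₁ ×ˢ Finset.univ : Finset (V × Fin k)) : Set (V × Fin k)),
        triangleEdges (lowerBoundTriangle M w p) := by
  ext e
  simp only [Set.mem_iUnion, Finset.coe_product, Set.mem_prod, Finset.mem_coe, Finset.coe_univ,
    Set.mem_univ, and_true, exists_prop, Prod.exists]
  constructor
  · rintro (⟨u, hu, x, hx, rfl⟩ | ⟨v, hv, x, hx, rfl⟩ | ⟨i, u, hu, rfl⟩)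
    · obtain ⟨i, -, rfl⟩ := h.bijOn_enum.surjOn hx
      exact ⟨u, i, hu, mk_mem_triangleEdges (h.triangle_vertices_ne hu i).2.1
        (by simp [lowerBoundTriangle]) (by simp [lowerBoundTriangle])⟩
    · obtain ⟨i, -, rfl⟩ := h.bijOn_enum.surjOn hx
      obtain ⟨u, hu, rfl⟩ := (h.bijOn i).surjOn hv
      exact ⟨u, i, hu, mk_mem_triangleEdges (h.triangle_vertices_ne hu i).2.2
        (by simp [lowerBoundTriangle]) (by simp [lowerBoundTriangle])⟩
    · exact ⟨u, i, hu, mk_mem_triangleEdges (h.triangle_vertices_ne hu i).1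
        (by simp [lowerBoundTriangle]) (by simp [lowerBoundTriangle])⟩
  · rintro ⟨u, i, hu, he⟩
    obtain ⟨h₁, h₂, h₃⟩ := h.triangle_vertices_ne hu i
    rw [lowerBoundTriangle, triangleEdges_triple h₁ h₂ h₃] at he
    rcases he with rfl | rfl | rfl
    · exact Or.inr (Or.inr ⟨i, u, hu, rfl⟩)
    · exact Or.inl ⟨u, hu, w i, h.enum_mem i, rfl⟩
    · exact Or.inr (Or.inl ⟨M i u, h.apply_mem hu i, w i, h.enum_mem i, rfl⟩)

theorem finite_lowerBoundEdges (h : IsLowerBoundConstruction V₁ V₂ V₃ M w) :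
    (lowerBoundEdges V₁ V₂ V₃ M).Finite := by
  rw [h.lowerBoundEdges_eq_biUnion]
  exact (Finset.finite_toSet _).biUnion fun p _ => finite_triangleEdges _

theorem ncard_lowerBoundEdges (h : IsLowerBoundConstruction V₁ V₂ V₃ M w) :
    (lowerBoundEdges V₁ V₂ V₃ M).ncard = 3 * (V₁.card * k) := by
  rw [h.lowerBoundEdges_eq_biUnion, (Finset.finite_toSet _).ncard_biUnion
      (fun p _ => finite_triangleEdges _) h.pairwiseDisjoint_triangleEdges,
    finsum_mem_coe_finset, Finset.sum_congr rfl fun p hp => ?_, Finset.sum_const,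
    Finset.card_product, Finset.card_univ, Fintype.card_fin, smul_eq_mul, mul_comm]
  obtain ⟨h₁, h₂, h₃⟩ := h.triangle_vertices_ne (Finset.mem_product.mp hp).1 p.2
  exact ncard_triangleEdges_triple h₁ h₂ h₃

theorem isNClique_lowerBoundTriangle (h : IsLowerBoundConstruction V₁ V₂ V₃ M w)
    {G : SimpleGraph V} (hG : G.edgeSet = lowerBoundEdges V₁ V₂ V₃ M) {p : V × Fin k}
    (hp : p ∈ V₁ ×ˢ Finset.univ) : G.IsNClique 3 (lowerBoundTriangle M w p) := by
  obtain ⟨h₁, h₂, h₃⟩ := h.triangle_vertices_ne (Finset.mem_product.mp hp).1 p.2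
  refine ⟨fun x hx y hy hxy => ?_, Finset.card_eq_three.mpr ⟨_, _, _, h₁, h₂, h₃, rfl⟩⟩
  rw [← mem_edgeSet, hG, h.lowerBoundEdges_eq_biUnion]
  exact Set.mem_biUnion (Finset.mem_coe.mpr hp) (mk_mem_triangleEdges hxy hx hy)

end IsLowerBoundConstruction

end

theorem lower_bound_graph_far_from_triangle_free_general
    {V : Type*} (G : SimpleGraph V)
    (V₁ V₂ V₃ : Finset V) (a k : ℕ)
    (hd₁₂ : Disjoint V₁ V₂) (hd₁₃ : Disjoint V₁ V₃) (hd₂₃ : Disjoint V₂ V₃)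
    (ha₁ : V₁.card = a) (hk : V₃.card = k)
    (M : Fin k → V → V)
    (hM : ∀ i, Set.BijOn (M i) ↑V₁ ↑V₂)
    (hMdisj : ∀ i j, i ≠ j → ∀ u ∈ V₁, M i u ≠ M j u)
    (hG : G.edgeSet = lowerBoundEdges V₁ V₂ V₃ M) :
    G.edgeSet.ncard = 3 * a * k ∧
    (∃ T : Finset (Finset V),
      T.card = a * k ∧
      (∀ t ∈ T, G.IsNClique 3 t) ∧
      (∀ t₁ ∈ T, ∀ t₂ ∈ T, t₁ ≠ t₂ → Disjoint (triangleEdges t₁) (triangleEdges t₂))) ∧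
    (∀ F : Set (Sym2 V), F ⊆ G.edgeSet → (G.deleteEdges F).CliqueFree 3 →
      a * k ≤ F.ncard) ∧
    (a * k : ℝ) = (1 / 3) * (G.edgeSet.ncard : ℝ) := by
  classical
  let e := V₃.equivFinOfCardEq hk
  set w : Fin k → V := fun i => e.symm i
  have h : IsLowerBoundConstruction V₁ V₂ V₃ M w :=
    ⟨hd₁₂, hd₁₃, hd₂₃, hM, hMdisj, fun i _ => (e.symm i).2,
      (Subtype.val_injective.comp e.symm.injective).injOn,
      fun x hx => ⟨e ⟨x, hx⟩, trivial, by simp [w]⟩⟩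
  set T := (V₁ ×ˢ Finset.univ).image (lowerBoundTriangle M w)
  have hT : T.card = a * k := by
    rw [Finset.card_image_of_injOn h.injOn_lowerBoundTriangle, Finset.card_product,
      Finset.card_univ, Fintype.card_fin, ha₁]
  have hcliques : ∀ t ∈ T, G.IsNClique 3 t :=
    Finset.forall_mem_image.mpr fun _ hp => h.isNClique_lowerBoundTriangle hG hp
  have hdisj : (T : Set (Finset V)).PairwiseDisjoint triangleEdges := by
    rw [Finset.coe_image, h.injOn_lowerBoundTriangle.pairwiseDisjoint_image]
    exact h.pairwiseDisjoint_triangleEdges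
  have hcard : G.edgeSet.ncard = 3 * a * k := by
    rw [hG, h.ncard_lowerBoundEdges, ha₁, mul_assoc]
  refine ⟨hcard, ⟨T, hT, hcliques, fun _ h₁ _ h₂ => hdisj h₁ h₂⟩, fun F hFG hF => ?_, ?_⟩
  · exact hT ▸ card_le_ncard_of_cliqueFree_deleteEdges
      (h.finite_lowerBoundEdges.subset (hG ▸ hFG)) hcliques hdisj hF
  · rw [hcard]
    push_cast
    ring

/-- The lower-bound construction graph (with `|V₁| = |V₂| = a ≥ 1`, `|V₃| = k ≥ 1`)
has exactly `3·a·k` edges, contains `a·k` pairwise edge-disjoint triangles, and is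
`(1/3)`-far from being triangle-free: every set `F` of edges whose deletion makes the
graph triangle-free satisfies `|F| ≥ a·k`, one third of the number of edges. -/
theorem lower_bound_graph_far_from_triangle_free
    {V : Type*} [Fintype V] [DecidableEq V] (G : SimpleGraph V)
    (V₁ V₂ V₃ : Finset V) (a k : ℕ) (ha : 1 ≤ a) (hk1 : 1 ≤ k)
    (hd₁₂ : Disjoint V₁ V₂) (hd₁₃ : Disjoint V₁ V₃) (hd₂₃ : Disjoint V₂ V₃)
    (ha₁ : V₁.card = a) (ha₂ : V₂.card = a) (hk : V₃.card = k)
    (M : Fin k → V → V)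
    (hM : ∀ i, Set.BijOn (M i) ↑V₁ ↑V₂)
    (hMdisj : ∀ i j, i ≠ j → ∀ u ∈ V₁, M i u ≠ M j u)
    (hG : G.edgeSet = lowerBoundEdges V₁ V₂ V₃ M) :
    G.edgeSet.ncard = 3 * a * k ∧
    (∃ T : Finset (Finset V),
      T.card = a * k ∧
      (∀ t ∈ T, G.IsNClique 3 t) ∧
      (∀ t₁ ∈ T, ∀ t₂ ∈ T, t₁ ≠ t₂ → Disjoint (triangleEdges t₁) (triangleEdges t₂))) ∧
    (∀ F : Set (Sym2 V), F ⊆ G.edgeSet → (G.deleteEdges F).CliqueFree 3 →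
      a * k ≤ F.ncard) ∧
    (a * k : ℝ) = (1 / 3) * (G.edgeSet.ncard : ℝ) :=
  lower_bound_graph_far_from_triangle_free_general G V₁ V₂ V₃ a k hd₁₂ hd₁₃ hd₂₃ ha₁ hk M hM hMdisj
    hG
end
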